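/- arXiv:2208.06855 — 3 statements merged into one kernel-verified Lean document; each statement's English description precedes it below -/
import Mathlib

section
/- The number of m-ary necklaces of length n (equivalence classes of functions from Fin n to Fin m under cyclic rotation) equals (1/n) * Σ_{d | n} φ(d) * m^(n/d), where φ is Euler's totient function. -/
/-- Cyclic rotation on strings of length `n`: sends `(x₁,…,xₙ)` to `(x₂,…,xₙ,x₁)`. -/
def rot {m n : ℕ} (w : Fin n → Fin m) : Fin n → Fin m := fun k => w ⟨(k.val + 1) % n, Nat.mod_lt _ k.pos⟩

/-- Two strings are rotation-equivalent if some power of the rotation sends one to the other. -/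
def rotRel {m n : ℕ} (y z : Fin n → Fin m) : Prop := ∃ j : ℕ, rot^[j] y = z

/-!
Rotation by `j` places is translation by `j` in the cyclic group `Fin n` acting on the domain of
a word, so by Burnside's lemma `n` times the number of necklaces is the sum over `a : Fin n` of the
number of words fixed by translation by `a`. Such words are the functions constant on the cosets
of the subgroup generated by `a`, so there are `m ^ (n / ord a)` of them. In a cyclic group of
order `n` exactly `φ d` elements have order `d`, for each `d ∣ n`.
-/

open Function AddAction

instance Fin.instIsAddCyclic (n : ℕ) [NeZero n] : IsAddCyclic (Fin n) :=
  isAddCyclic_of_surjective (ZMod.finEquiv n).symm (ZMod.finEquiv n).symm.surjective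

instance DomAddAct.instFintype {G : Type*} [Fintype G] : Fintype Gᵈᵃᵃ :=
  Fintype.ofEquiv G DomAddAct.mk

theorem AddAction.sum_natCard_fixedBy_eq_natCard_orbits_mul_natCard (G X : Type*) [AddGroup G]
    [Fintype G] [AddAction G X] [Finite X] :
    ∑ g : G, Nat.card (fixedBy X g) = Nat.card (orbitRel.Quotient G X) * Nat.card G := by
  classical
  have := Fintype.ofFinite X
  simp only [Nat.card_eq_fintype_card]
  exact sum_card_fixedBy_eq_card_orbits_mul_card_addGroup G X

theorem IsAddCyclic.sum_comp_addOrderOf {G M : Type*} [AddGroup G] [Fintype G] [IsAddCyclic G]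
    [AddCommMonoid M] (f : ℕ → M) :
    ∑ a : G, f (addOrderOf a) = ∑ d ∈ (Fintype.card G).divisors, d.totient • f d := by
  classical
  rw [← Finset.sum_fiberwise_of_maps_to (g := addOrderOf) (t := (Fintype.card G).divisors)
    fun a _ => Nat.mem_divisors.2 ⟨addOrderOf_dvd_card, Fintype.card_ne_zero⟩]
  refine Finset.sum_congr rfl fun d hd => ?_
  rw [Finset.sum_congr rfl fun a ha => by rw [(Finset.mem_filter.1 ha).2], Finset.sum_const,
    IsAddCyclic.card_addOrderOf_eq_totient (Nat.dvd_of_mem_divisors hd)]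

theorem AddSubgroup.index_zmultiples_eq_natCard_div_addOrderOf {G : Type*} [AddGroup G]
    [Finite G] (a : G) : (zmultiples a).index = Nat.card G / addOrderOf a := by
  rw [← (zmultiples a).index_mul_card, Nat.card_zmultiples,
    Nat.mul_div_cancel _ (addOrderOf_pos a)]

namespace Function

variable {G Y : Type*} [AddGroup G]

def periodicEquivQuotientFun (c : G) :
    {f : G → Y // Periodic f c} ≃ (G ⧸ AddSubgroup.zmultiples c → Y) where
  toFun f := f.2.lift
  invFun g := ⟨g ∘ (↑), fun x => congrArg g
    (QuotientAddGroup.mk_add_of_mem x (AddSubgroup.mem_zmultiples c))⟩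
  left_inv _ := rfl
  right_inv _ := funext fun q => QuotientAddGroup.induction_on q fun _ => rfl

theorem natCard_periodic [Finite G] (c : G) :
    Nat.card {f : G → Y // Periodic f c} = Nat.card Y ^ (Nat.card G / addOrderOf c) := by
  rw [Nat.card_congr (periodicEquivQuotientFun c), Nat.card_fun,
    ← AddSubgroup.index_zmultiples_eq_natCard_div_addOrderOf]
  rfl

end Function

namespace DomAddAct

variable {G Y : Type*} [AddCommGroup G]

theorem mk_vadd_eq_self_iff_periodic {f : G → Y} {a : G} : mk a +ᵥ f = f ↔ Periodic f a := by
  simp only [funext_iff, vadd_apply, Equiv.symm_apply_apply, vadd_eq_add, add_comm a, Periodic]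

theorem natCard_fixedBy_mk [Finite G] (a : G) :
    Nat.card (fixedBy (G → Y) (mk a)) = Nat.card Y ^ (Nat.card G / addOrderOf a) := by
  rw [← natCard_periodic]
  exact Nat.card_congr (Equiv.subtypeEquivRight fun _ => mk_vadd_eq_self_iff_periodic)

end DomAddAct

section Necklace

open Fin.NatCast

variable {m n : ℕ} [NeZero n]

theorem rot_eq_vadd :
    (rot : (Fin n → Fin m) → Fin n → Fin m) = (DomAddAct.mk (1 : Fin n) +ᵥ ·) := by
  funext w k
  simp only [rot, DomAddAct.vadd_apply, Equiv.symm_apply_apply, vadd_eq_add]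
  congr 1
  ext
  simp [Fin.val_add, add_comm]

theorem rot_iterate (j : ℕ) :
    (rot : (Fin n → Fin m) → Fin n → Fin m)^[j] = (DomAddAct.mk (j : Fin n) +ᵥ ·) := by
  rw [rot_eq_vadd, vadd_iterate, ← DomAddAct.mk_nsmul, nsmul_one]

theorem rotRel_iff_exists_vadd {y z : Fin n → Fin m} :
    rotRel y z ↔ ∃ a : Fin n, DomAddAct.mk a +ᵥ y = z :=
  ⟨fun ⟨j, h⟩ => ⟨j, by rwa [rot_iterate] at h⟩,
    fun ⟨a, h⟩ => ⟨a.val, by rw [rot_iterate, Fin.cast_val_eq_self]; exact h⟩⟩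

theorem natCard_quot_rotRel :
    Nat.card (Quot (@rotRel m n)) =
      Nat.card (orbitRel.Quotient (Fin n)ᵈᵃᵃ (Fin n → Fin m)) := by
  refine Nat.card_congr (Quot.congrRight fun y z => ?_)
  rw [rotRel_iff_exists_vadd, Setoid.comm', orbitRel_apply, mem_orbit_iff,
    DomAddAct.mk.exists_congr_left]
  rfl

end Necklace

theorem necklace_count_general (m n : ℕ) :
    n * Nat.card (Quot (@rotRel m n)) =
      ∑ d ∈ n.divisors, Nat.totient d * m ^ (n / d) := by
  obtain rfl | hn := n.eq_zero_or_pos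
  · simp
  have : NeZero n := ⟨hn.ne'⟩
  calc n * Nat.card (Quot (@rotRel m n))
      = Nat.card (orbitRel.Quotient (Fin n)ᵈᵃᵃ (Fin n → Fin m)) * Nat.card (Fin n)ᵈᵃᵃ := by
        rw [natCard_quot_rotRel, Nat.card_congr DomAddAct.mk.symm, Nat.card_fin, mul_comm]
    _ = ∑ a : Fin n, Nat.card (fixedBy (Fin n → Fin m) (DomAddAct.mk a)) := by
        rw [← sum_natCard_fixedBy_eq_natCard_orbits_mul_natCard, ← DomAddAct.mk.sum_comp]
    _ = ∑ a : Fin n, m ^ (n / addOrderOf a) := by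
        simp only [DomAddAct.natCard_fixedBy_mk, Nat.card_fin]
    _ = ∑ d ∈ n.divisors, Nat.totient d * m ^ (n / d) := by
        rw [IsAddCyclic.sum_comp_addOrderOf (fun d => m ^ (n / d)), Fintype.card_fin]
        simp only [smul_eq_mul]

/-- The number of `m`-ary necklaces of length `n` equals
`(1/n) * ∑_{d ∣ n} φ(d) * m^(n/d)`. -/
theorem necklace_count (m n : ℕ) (hn : 0 < n) :
    n * Nat.card (Quot (@rotRel m n)) =
      ∑ d ∈ n.divisors, Nat.totient d * m ^ (n / d) :=
  necklace_count_general m n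
end

section
/- The number of Lyndon words of length n over an alphabet of size m equals (1/n) * Σ_{d | n} μ(d) * m^(n/d), where μ is the Möbius function. -/
/-- Strict lexicographic order on strings. -/
def lexLt {m n : ℕ} (y z : Fin n → Fin m) : Prop :=
  ∃ k : Fin n, (∀ l, l < k → y l = z l) ∧ y k < z k

/-- A Lyndon word: strictly lexicographically smaller than all its nontrivial rotations. -/
def IsLyndon {m n : ℕ} (w : Fin n → Fin m) : Prop :=
  ∀ j, 0 < j → j < n → lexLt w (rot^[j] w)

open Function

namespace Function

theorem card_isPeriodicPt_eq_sum_card_minimalPeriod {α : Type*} [Finite α] (f : α → α) {d : ℕ}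
    (hd : 0 < d) :
    Nat.card {x // IsPeriodicPt f d x} =
      ∑ e ∈ d.divisors, Nat.card {x // minimalPeriod f x = e} := by
  classical
  have := Fintype.ofFinite α
  simp only [Nat.card_eq_fintype_card, Fintype.card_subtype]
  rw [Finset.card_eq_sum_card_fiberwise (f := minimalPeriod f) fun x hx ↦
    Nat.mem_divisors.mpr ⟨(Finset.mem_filter.mp hx).2.minimalPeriod_dvd, hd.ne'⟩]
  refine Finset.sum_congr rfl fun e he ↦ ?_
  rw [Finset.filter_filter]
  refine congrArg _ (Finset.filter_congr fun x _ ↦ and_iff_right_of_imp fun hx ↦ ?_)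
  exact isPeriodicPt_iff_minimalPeriod_dvd.mpr (hx ▸ Nat.dvd_of_mem_divisors he)

variable {α : Type*} [LinearOrder α] {f : α → α} {n : ℕ} {x y : α}

def IsOrbitMin (f : α → α) (n : ℕ) (x : α) : Prop :=
  IsPeriodicPt f n x ∧ ∀ j, 0 < j → j < n → x < f^[j] x

theorem IsOrbitMin.minimalPeriod_eq (hn : 0 < n) (hx : IsOrbitMin f n x) :
    minimalPeriod f x = n := by
  refine (hx.1.minimalPeriod_le hn).eq_of_not_lt fun hlt ↦ ?_
  have hpos := hx.1.minimalPeriod_pos hn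
  simpa only [iterate_minimalPeriod, lt_self_iff_false] using hx.2 _ hpos hlt

theorem IsOrbitMin.eq_of_iterate_eq (hn : 0 < n) (hx : IsOrbitMin f n x)
    (hy : IsOrbitMin f n y) {k : ℕ} (h : f^[k] x = y) : x = y := by
  rw [← hx.1.iterate_mod_apply] at h
  rcases (k % n).eq_zero_or_pos with h0 | hpos
  · simpa [h0] using h
  · have hk := k.mod_lt hn
    have hyx : f^[n - k % n] y = x := by
      rw [← h, ← iterate_add_apply, Nat.sub_add_cancel hk.le]
      exact hx.1
    exact absurd (h ▸ hx.2 _ hpos hk) (hyx ▸ hy.2 _ (by omega) (by omega)).not_gt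

theorem exists_isOrbitMin_iterate (hn : 0 < n) (hx : minimalPeriod f x = n) :
    ∃ i < n, IsOrbitMin f n (f^[i] x) := by
  have hper : IsPeriodicPt f n x := hx ▸ isPeriodicPt_minimalPeriod f x
  obtain ⟨i, hi, hmin⟩ := (Finset.range n).exists_min_image (f^[·] x) ⟨0, by simpa using hn⟩
  refine ⟨i, Finset.mem_range.mp hi, hper.apply_iterate i, fun j hj hjn ↦ ?_⟩
  have hperiod : minimalPeriod f (f^[i] x) = n := by
    rw [minimalPeriod_apply_iterate (mk_mem_periodicPts hn hper), hx]
  have hne : f^[j] (f^[i] x) ≠ f^[i] x :=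
    not_isPeriodicPt_of_pos_of_lt_minimalPeriod hj.ne' (hperiod ▸ hjn)
  have hle := hmin _ (Finset.mem_range.mpr ((j + i).mod_lt hn))
  rw [hper.iterate_mod_apply, iterate_add_apply] at hle
  exact hle.lt_of_ne hne.symm

theorem card_minimalPeriod_eq_mul_card_isOrbitMin (f : α → α) (hn : 0 < n) :
    Nat.card {x // minimalPeriod f x = n} = n * Nat.card {x // IsOrbitMin f n x} := by
  let φ : Fin n × {x // IsOrbitMin f n x} → {x // minimalPeriod f x = n} := fun p ↦
    ⟨f^[p.1] p.2, by rw [minimalPeriod_apply_iterate (mk_mem_periodicPts hn p.2.2.1),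
      p.2.2.minimalPeriod_eq hn]⟩
  have hφ : Bijective φ := by
    constructor
    · rintro ⟨j, y, hy⟩ ⟨j', y', hy'⟩ h
      replace h : f^[j] y = f^[j'] y' := congrArg Subtype.val h
      obtain rfl : y = y' := hy.eq_of_iterate_eq hn hy' (k := n - j' + j) <| by
        rw [iterate_add_apply, h, ← iterate_add_apply, Nat.sub_add_cancel j'.isLt.le]
        exact hy'.1
      have hj : (j : ℕ) < minimalPeriod f y := hy.minimalPeriod_eq hn ▸ j.isLt
      have hj' : (j' : ℕ) < minimalPeriod f y := hy.minimalPeriod_eq hn ▸ j'.isLt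
      rw [Fin.ext (iterate_injOn_Iio_minimalPeriod hj hj' h)]
    · rintro ⟨x, hx⟩
      obtain ⟨i, hi, hmin⟩ := exists_isOrbitMin_iterate hn hx
      refine ⟨(⟨(n - i) % n, Nat.mod_lt _ hn⟩, ⟨_, hmin⟩), Subtype.ext ?_⟩
      change f^[(n - i) % n] (f^[i] x) = x
      rw [hmin.1.iterate_mod_apply, ← iterate_add_apply, Nat.sub_add_cancel hi.le, ← hx]
      exact isPeriodicPt_minimalPeriod f x
  rw [← Nat.card_congr (Equiv.ofBijective φ hφ), Nat.card_prod, Nat.card_eq_fintype_card,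
    Fintype.card_fin]

end Function

section Lyndon

variable {m n : ℕ}

theorem rot_iterate_apply (w : Fin n → Fin m) (j : ℕ) (k : Fin n) :
    rot^[j] w k = w ⟨(k + j) % n, Nat.mod_lt _ k.pos⟩ := by
  induction j generalizing w with
  | zero => simp [Nat.mod_eq_of_lt k.isLt]
  | succ j ih =>
    rw [iterate_succ_apply, ih]
    simp only [rot, Nat.mod_add_mod, add_assoc]

theorem isPeriodicPt_rot (w : Fin n → Fin m) : IsPeriodicPt rot n w :=
  funext fun k ↦ by simp [rot_iterate_apply, Nat.mod_eq_of_lt k.isLt]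

theorem apply_eq_apply_mod_of_isPeriodicPt_rot {d : ℕ} {w : Fin n → Fin m}
    (hw : IsPeriodicPt rot d w) (k : Fin n) :
    w k = w ⟨k % d, (Nat.mod_le _ _).trans_lt k.isLt⟩ := by
  have := congrFun (hw.mul_const (k / d)).eq ⟨k % d, (Nat.mod_le _ _).trans_lt k.isLt⟩
  rw [← this, rot_iterate_apply]
  simp only [Nat.mod_add_div, Nat.mod_eq_of_lt k.isLt]

theorem card_isPeriodicPt_rot (hn : 0 < n) {d : ℕ} (hdn : d ∣ n) :
    Nat.card {w : Fin n → Fin m // IsPeriodicPt rot d w} = m ^ d := by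
  have hd : 0 < d := Nat.pos_of_dvd_of_pos hdn hn
  let e : {w : Fin n → Fin m // IsPeriodicPt rot d w} ≃ (Fin d → Fin m) :=
    { toFun := fun w i ↦ w.1 (Fin.castLE (Nat.le_of_dvd hn hdn) i)
      invFun := fun v ↦ ⟨fun k ↦ v ⟨k % d, Nat.mod_lt _ hd⟩, funext fun k ↦ by
        simp [rot_iterate_apply, Nat.mod_mod_of_dvd _ hdn]⟩
      left_inv := fun w ↦ Subtype.ext <| funext fun k ↦
        (apply_eq_apply_mod_of_isPeriodicPt_rot w.2 k).symm
      right_inv := fun v ↦ funext fun i ↦ by simp [Nat.mod_eq_of_lt i.isLt] }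
  rw [Nat.card_congr e, Nat.card_fun, Nat.card_eq_fintype_card, Nat.card_eq_fintype_card,
    Fintype.card_fin, Fintype.card_fin]

-- `lexLt` is definitionally the `<` of `Lex (Fin n → Fin m)`.
theorem isLyndon_iff_isOrbitMin (w : Fin n → Fin m) :
    IsLyndon w ↔ IsOrbitMin (α := Lex (Fin n → Fin m)) rot n (toLex w) :=
  ⟨fun h ↦ ⟨isPeriodicPt_rot w, h⟩, And.right⟩

theorem card_minimalPeriod_rot_eq_mul_card_isLyndon (hn : 0 < n) :
    Nat.card {w : Fin n → Fin m // minimalPeriod rot w = n} =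
      n * Nat.card {w : Fin n → Fin m // IsLyndon w} := by
  refine (card_minimalPeriod_eq_mul_card_isOrbitMin (α := Lex (Fin n → Fin m)) rot hn).trans ?_
  exact congrArg _ (Nat.card_congr (toLex.subtypeEquiv fun w ↦ isLyndon_iff_isOrbitMin w)).symm

end Lyndon

/-- The number of Lyndon words of length `n` over an alphabet of size `m` equals
`(1/n) * ∑_{d ∣ n} μ(d) m^(n/d)` (stated multiplied through by `n`). -/
theorem lyndon_count (m n : ℕ) (hn : 0 < n) :
    (n : ℤ) * Nat.card {w : Fin n → Fin m // IsLyndon w} =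
      ∑ d ∈ n.divisors, (ArithmeticFunction.moebius d) * (m : ℤ) ^ (n / d) := by
  have hfixed : ∀ d > 0, d ∈ {d | d ∣ n} →
      ∑ e ∈ d.divisors, (Nat.card {w : Fin n → Fin m // minimalPeriod rot w = e} : ℤ) = m ^ d := by
    intro d hd hdn
    rw [← Nat.cast_sum, ← card_isPeriodicPt_eq_sum_card_minimalPeriod rot hd,
      card_isPeriodicPt_rot hn hdn, Nat.cast_pow]
  have hinv := (ArithmeticFunction.sum_eq_iff_sum_mul_moebius_eq_on _ fun _ _ ↦ dvd_trans).mp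
    hfixed n hn dvd_rfl
  simp only [Int.cast_id] at hinv
  rw [Nat.sum_divisorsAntidiagonal (f := fun a b ↦ (ArithmeticFunction.moebius a : ℤ) * m ^ b)]
    at hinv
  rw [← Nat.cast_mul, ← card_minimalPeriod_rot_eq_mul_card_isLyndon hn, ← hinv]
end

section
/- For every n ≥ 1 and m ≥ 1, there exists a de Bruijn sequence of order n over an alphabet of size m: a cyclic sequence of length m^n in which every string of length n over the alphabet occurs exactly once as a (cyclic) substring. -/
/-!
Words of length `d + 1` are the edges of the de Bruijn graph on words of length `d`, an edge `e`
going from `Fin.init e` to `Fin.tail e`. An Eulerian circuit is encoded as a permutation `π` of the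
edges with `src (π e) = tgt e` and a single cycle. Rotating words gives such a permutation. Take one
whose cycle through a fixed edge is as large as possible: if that cycle missed an edge, strong
connectivity would yield two edges with a common target in different cycles, and exchanging their
successors would merge the two cycles. Reading the first letters of the edges along the resulting
single cycle gives the de Bruijn sequence.
-/

open Equiv Finset

namespace Equiv.Perm

variable {α : Type*} [DecidableEq α] [Finite α] {π : Perm α} {x y : α}

theorem sameCycle_mul_swap_of_not_sameCycle (hxy : ¬π.SameCycle x y) :
    (π * swap x y).SameCycle x y := by
  set σ := π * swap x y
  -- Along the `π`-orbit of `y`, `σ` agrees with `π` until `y` is reached again.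
  have walk : ∀ k : ℕ, ∀ z, (π ^ k) z = y → σ.SameCycle z y := by
    intro k
    induction k with
    | zero => rintro z rfl; rfl
    | succ k ih =>
      intro z hz
      by_cases hzy : z = y
      · rw [hzy]
      have hzx : z ≠ x := by
        rintro rfl
        exact hxy ⟨(k + 1 : ℕ), by rwa [zpow_natCast]⟩
      have hσz : σ z = π z := by simp [σ, swap_apply_of_ne_of_ne hzx hzy]
      refine (sameCycle_apply_right.2 (SameCycle.refl σ z)).trans ?_
      rw [hσz]
      exact ih (π z) (by rwa [← mul_apply, ← pow_succ])
  obtain ⟨k, hk⟩ := (sameCycle_apply_left.2 (SameCycle.refl π y)).exists_nat_pow_eq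
  have hσx : σ x = π y := by simp [σ]
  exact (sameCycle_apply_right.2 (SameCycle.refl σ x)).trans (hσx ▸ walk k _ hk)

theorem SameCycle.mul_swap_of_not_sameCycle {z w : α} (hzw : π.SameCycle z w)
    (hxy : ¬π.SameCycle x y) : (π * swap x y).SameCycle z w := by
  set σ := π * swap x y
  have hx_y : σ.SameCycle x y := sameCycle_mul_swap_of_not_sameCycle hxy
  have step : ∀ u, σ.SameCycle u (π u) := by
    intro u
    by_cases hux : u = x
    · subst hux
      have : σ y = π u := by simp [σ]
      rw [← this, sameCycle_apply_right]
      exact hx_y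
    by_cases huy : u = y
    · subst huy
      have : σ x = π u := by simp [σ]
      rw [← this, sameCycle_apply_right]
      exact hx_y.symm
    have : σ u = π u := by simp [σ, swap_apply_of_ne_of_ne hux huy]
    rw [← this, sameCycle_apply_right]
  obtain ⟨k, rfl⟩ := hzw.exists_nat_pow_eq
  clear hzw
  induction k with
  | zero => rfl
  | succ k ih => exact ih.trans (by rw [pow_succ', mul_apply]; exact step _)

end Equiv.Perm

theorem Equiv.Perm.exists_zmod_equiv_of_forall_sameCycle {α : Type*} [Fintype α] {π : Perm α}
    {a : α} (h : ∀ b, π.SameCycle a b) {N : ℕ} (hN : Fintype.card α = N) :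
    ∃ f : ZMod N ≃ α, ∀ i, f (i + 1) = π (f i) := by
  have horbit : ∀ b, b ∈ MulAction.orbit (Subgroup.zpowers π) a := fun b => by
    obtain ⟨i, hi⟩ := h b
    exact ⟨⟨π ^ i, i, rfl⟩, hi⟩
  set g := (MulAction.orbitZPowersEquiv π a).symm.trans (subtypeUnivEquiv horbit)
  have hg : ∀ i : ℤ, g i = (π ^ i) a := fun i => by
    simp [g, MulAction.orbitZPowersEquiv_symm_apply' π a i, Subgroup.smul_def, Perm.smul_def]
  have hp : Function.minimalPeriod (π • ·) a = N := by
    rw [← hN, ← Nat.card_eq_fintype_card, ← Nat.card_congr g, Nat.card_zmod]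
  refine ⟨(ZMod.ringEquivCongr hp).symm.toEquiv.trans g, fun i => ?_⟩
  obtain ⟨j, rfl⟩ := ZMod.intCast_surjective i
  simp only [Equiv.trans_apply, RingEquiv.toEquiv_eq_coe, RingEquiv.coe_toEquiv, map_add,
    map_intCast, map_one]
  rw [← Int.cast_one, ← Int.cast_add, hg, hg, add_comm, zpow_one_add, mul_apply]

section EulerianCircuit

variable {E V : Type*} {src tgt : E → V}

theorem exists_tgt_eq_sameCycle_not_sameCycle
    (hconn : ∀ S : Set V, S.Nonempty → (∀ e, src e ∈ S → tgt e ∈ S) → S = Set.univ)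
    {π : Perm E} (hπ : ∀ e, src (π e) = tgt e) {e₀ e₁ : E} (he₁ : ¬π.SameCycle e₀ e₁) :
    ∃ x y, tgt x = tgt y ∧ π.SameCycle e₀ x ∧ ¬π.SameCycle e₀ y := by
  by_contra! hclosed
  have hsrc : ∀ e e', src e = src e' → π.SameCycle e₀ e' → π.SameCycle e₀ e := by
    intro e e' hee' he'
    have := hclosed (π.symm e') (π.symm e)
      (by rw [← hπ, ← hπ, apply_symm_apply, apply_symm_apply, hee'])
      (by rwa [Perm.sameCycle_symm_apply_right])
    rwa [Perm.sameCycle_symm_apply_right] at this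
  set S : Set V := {v | ∃ e, π.SameCycle e₀ e ∧ src e = v}
  have hS : S = Set.univ := hconn S ⟨src e₀, e₀, .refl _ _, rfl⟩ <| by
    rintro e ⟨e', he', hee'⟩
    exact ⟨π e, Perm.sameCycle_apply_right.2 (hsrc e e' hee'.symm he'), hπ e⟩
  obtain ⟨e', he', hee'⟩ := hS.symm ▸ Set.mem_univ (src e₁)
  exact he₁ (hsrc e₁ e' hee'.symm he')

variable [Finite E]

theorem exists_eulerian_circuit_perm
    (hconn : ∀ S : Set V, S.Nonempty → (∀ e, src e ∈ S → tgt e ∈ S) → S = Set.univ)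
    {π₀ : Perm E} (hπ₀ : ∀ e, src (π₀ e) = tgt e) (e₀ : E) :
    ∃ π : Perm E, (∀ e, src (π e) = tgt e) ∧ ∀ e, π.SameCycle e₀ e := by
  classical
  have := Fintype.ofFinite E
  set T : Finset (Perm E) := {π | ∀ e, src (π e) = tgt e}
  obtain ⟨π, hπT, hmax⟩ := T.exists_max_image (fun π => #({e | π.SameCycle e₀ e} : Finset E))
    ⟨π₀, by simpa [T] using hπ₀⟩
  have hπ : ∀ e, src (π e) = tgt e := by simpa [T] using hπT
  refine ⟨π, hπ, fun e₁ => ?_⟩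
  by_contra he₁
  obtain ⟨x, y, hxy, hx, hy⟩ := exists_tgt_eq_sameCycle_not_sameCycle hconn hπ he₁
  have hxy' : ¬π.SameCycle x y := fun h => hy (hx.trans h)
  have hσ : ∀ e, src ((π * swap x y) e) = tgt e := fun e => by
    rw [Perm.mul_apply, hπ, swap_apply_def]
    split_ifs <;> simp_all
  have hlt : #({e | π.SameCycle e₀ e} : Finset E)
      < #({e | (π * swap x y).SameCycle e₀ e} : Finset E) := by
    refine card_lt_card ((ssubset_iff_of_subset fun e he => ?_).2 ⟨y, ?_, ?_⟩)
    · simp only [mem_filter, mem_univ, true_and] at he ⊢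
      exact he.mul_swap_of_not_sameCycle hxy'
    · simpa using (hx.mul_swap_of_not_sameCycle hxy').trans
        (Perm.sameCycle_mul_swap_of_not_sameCycle hxy')
    · simpa using hy
  exact (hmax _ (by simpa [T] using hσ)).not_gt hlt

end EulerianCircuit

namespace DeBruijn

variable {α : Type*} {d : ℕ}

theorem set_eq_univ_of_closed (S : Set (Fin d → α)) (hS : S.Nonempty)
    (hclosed : ∀ e : Fin (d + 1) → α, Fin.init e ∈ S → Fin.tail e ∈ S) : S = Set.univ := by
  refine Set.eq_univ_of_forall fun v => ?_
  obtain ⟨u, hu⟩ := hS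
  -- the `j`-th window of length `d` of the word `u ++ v`
  have key : ∀ j (hj : j ≤ d), (fun k : Fin d =>
      if h : (k : ℕ) + j < d then u ⟨k + j, h⟩ else v ⟨k + j - d, by omega⟩) ∈ S := by
    intro j
    induction j with
    | zero => intro _; simpa using hu
    | succ j ih =>
      intro hj
      convert hclosed (fun k : Fin (d + 1) =>
        if h : (k : ℕ) + j < d then u ⟨k + j, h⟩ else v ⟨k + j - d, by omega⟩) ?_
        using 3 with k
      · simp only [Fin.tail, Fin.val_succ, Nat.add_right_comm _ 1 j, add_assoc]
      · exact ih (by omega)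
  simpa using key d le_rfl

def rotateLeft : Perm (Fin (d + 1) → α) where
  toFun e := Fin.snoc (Fin.tail e) (e 0)
  invFun e := Fin.cons (e (Fin.last d)) (Fin.init e)
  left_inv e := by simp
  right_inv e := by simp

theorem init_rotateLeft (e : Fin (d + 1) → α) : Fin.init (rotateLeft e) = Fin.tail e := by
  simp [rotateLeft]

theorem apply_eq_apply_add_zero {N : ℕ} {f : ZMod N → Fin (d + 1) → α}
    (hf : ∀ i, Fin.init (f (i + 1)) = Fin.tail (f i)) (i : ZMod N) (k : Fin (d + 1)) :
    f i k = f (i + k.val) 0 := by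
  obtain ⟨k, hk⟩ := k
  induction k generalizing i with
  | zero => simp
  | succ k ih =>
    have : f (i + 1) ⟨k, by omega⟩ = f i ⟨k + 1, hk⟩ := congrFun (hf i) ⟨k, by omega⟩
    rw [← this, ih]
    exact congrArg (f · 0) (by push_cast; ring)

theorem existsUnique_window_of_equiv {N : ℕ} (f : ZMod N ≃ (Fin (d + 1) → α))
    (hf : ∀ i, Fin.init (f (i + 1)) = Fin.tail (f i)) :
    ∃ s : ZMod N → α, ∀ w : Fin (d + 1) → α,
      ∃! i : ZMod N, ∀ k : Fin (d + 1), s (i + (k.val : ZMod N)) = w k := by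
  refine ⟨fun i => f i 0, fun w => ⟨f.symm w, fun k => ?_, fun i hi => ?_⟩⟩
  · show f _ 0 = w k
    rw [← apply_eq_apply_add_zero hf, apply_symm_apply]
  · rw [eq_symm_apply]
    funext k
    rw [apply_eq_apply_add_zero hf]
    exact hi k

end DeBruijn

theorem deBruijn_exists_general (n m : ℕ) (hm : 1 ≤ m) :
    ∃ s : ZMod (m ^ n) → Fin m, ∀ w : Fin n → Fin m,
      ∃! i : ZMod (m ^ n), ∀ k : Fin n, s (i + (k.val : ZMod (m ^ n))) = w k := by
  rcases n with _ | d
  · refine ⟨fun _ => ⟨0, hm⟩, fun w => ⟨0, fun k => k.elim0, fun i _ => ?_⟩⟩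
    exact Subsingleton.elim (α := ZMod 1) _ _
  obtain ⟨π, hπ, hcyc⟩ := exists_eulerian_circuit_perm DeBruijn.set_eq_univ_of_closed
    DeBruijn.init_rotateLeft (fun _ => ⟨0, hm⟩ : Fin (d + 1) → Fin m)
  obtain ⟨f, hf⟩ := Perm.exists_zmod_equiv_of_forall_sameCycle hcyc
    (by simp : Fintype.card (Fin (d + 1) → Fin m) = m ^ (d + 1))
  exact DeBruijn.existsUnique_window_of_equiv f fun i => by rw [hf, hπ]

/-- For every `n ≥ 1`, `m ≥ 1`, there exists a de Bruijn sequence of order `n` over an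
alphabet of size `m`: a cyclic sequence of length `m^n` in which every length-`n`
string occurs exactly once as a cyclic substring. -/
theorem deBruijn_exists (n m : ℕ) (hn : 1 ≤ n) (hm : 1 ≤ m) :
    ∃ s : ZMod (m ^ n) → Fin m, ∀ w : Fin n → Fin m,
      ∃! i : ZMod (m ^ n), ∀ k : Fin n, s (i + (k.val : ZMod (m ^ n))) = w k :=
  deBruijn_exists_general n m hm
end
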